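/- In ℂ³, the standard basis together with the three bases B_a = {3^{−1/2}(ω₃^{a x² + b x})_{x ∈ F₃} : b ∈ F₃} for a ∈ {0,1,2} form four pairwise mutually unbiased orthonormal bases; in particular N(3) = 4. -/

import Mathlib

/-!
For an odd prime `p` and the standard additive character `ψ` of `ZMod p`, fix `a` and look at the
vectors `x ↦ p^{-1/2} ψ(a x² + b x)`, `b ∈ ZMod p`. They are the characters of `ZMod p` twisted
by `ψ(a x²)`, hence orthonormal; each entry has modulus `p^{-1/2}`, so they are unbiased to the
standard basis; and the overlap of two of them with different `a` is `p⁻¹` times a quadratic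
Gauss sum, of modulus `√p`. This gives `p + 1` mutually unbiased bases, which for `p = 3` are the
bases of the statement.

Conversely, let `P_u = |u⟩⟨u|` in dimension `d`. For mutually unbiased bases `B_1, …, B_m` the
traceless matrices `P_u - I/d` with `u ∈ B_i` are orthogonal to those with `u ∈ B_j`, `j ≠ i`, and
to `I`, and inside one basis their Gram matrix is `1 - J/d`. Dropping one vector from each basis and
adding `I` leaves `m (d - 1) + 1` linearly independent matrices, so `m (d - 1) + 1 ≤ d²`, that is,
`m ≤ d + 1`.
-/

open scoped InnerProductSpace ComplexConjugate

def IsMUBFamily (d m : ℕ) (B : Fin m → Fin d → EuclideanSpace ℂ (Fin d)) : Prop :=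
  (∀ i, Orthonormal ℂ (B i) ∧ Submodule.span ℂ (Set.range (B i)) = ⊤) ∧
  (∀ i j, i ≠ j → ∀ a b, ‖⟪B i a, B j b⟫_ℂ‖ ^ 2 = 1 / d)

noncomputable def N (d : ℕ) : ℕ :=
  sSup {m : ℕ | ∃ B : Fin m → Fin d → EuclideanSpace ℂ (Fin d), IsMUBFamily d m B}

/-- The vector `3^{−1/2} (ω₃^{a x² + b x})_{x ∈ F₃}` of `ℂ³`, with
`ω₃ = exp(2πi/3)`. -/
noncomputable def v3 (a b : ZMod 3) : EuclideanSpace ℂ (ZMod 3) :=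
  WithLp.toLp 2 fun x => (1 / Real.sqrt 3 : ℂ) *
    Complex.exp (2 * Real.pi * Complex.I * (ZMod.val (a * x ^ 2 + b * x) : ℂ) / 3)

/-- The standard basis of `ℂ³` (index `none`) together with the three bases
`B_a = {v_{a,b} : b ∈ F₃}`, `a ∈ F₃` (index `some a`). -/
noncomputable def W3 : Option (ZMod 3) → ZMod 3 → EuclideanSpace ℂ (ZMod 3)
  | none => fun y => EuclideanSpace.single y (1 : ℂ)
  | some a => fun b => v3 a b

namespace AddChar

variable {F : Type*} [Field F] [Fintype F] [DecidableEq F] {ψ : AddChar F ℂ}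

theorem norm_sum_quadratic_sq (hF : ringChar F ≠ 2) (hψ : ψ.IsPrimitive) {c : F} (hc : c ≠ 0)
    (d : F) : ‖∑ x, ψ (c * x ^ 2 + d * x)‖ ^ 2 = Fintype.card F := by
  set q : F → F := fun x => c * x ^ 2 + d * x
  -- After `x = y + t` the phase is affine in `y` with slope `2ct`, so the `y`-sum kills `t ≠ 0`.
  have hq : ∀ y t, q (y + t) - q y = q t + y * (t * (2 * c)) := fun y t => by ring
  have h2c : ∀ t, t * (2 * c) = 0 ↔ t = 0 := by simp [Ring.two_ne_zero hF, hc]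
  apply Complex.ofReal_injective
  calc ((‖∑ x, ψ (q x)‖ ^ 2 : ℝ) : ℂ)
      = ∑ y, ∑ t, ψ (q (y + t) - q y) := by
        rw [Complex.ofReal_pow, ← Complex.conj_mul', map_sum, Finset.sum_mul_sum]
        refine Finset.sum_congr rfl fun y _ => ?_
        rw [← Equiv.sum_comp (Equiv.addLeft y)]
        refine Finset.sum_congr rfl fun t _ => ?_
        rw [← map_neg_eq_conj, ← map_add_eq_mul, neg_add_eq_sub]
        rfl
    _ = ∑ t, ψ (q t) * ∑ y, ψ (y * (t * (2 * c))) := by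
        rw [Finset.sum_comm]
        simp_rw [hq, map_add_eq_mul, Finset.mul_sum]
    _ = Fintype.card F := by
        simp only [sum_mulShift _ hψ, h2c]
        simp [q]

end AddChar

noncomputable def chirp (p : ℕ) [NeZero p] (a b : ZMod p) : EuclideanSpace ℂ (ZMod p) :=
  WithLp.toLp 2 fun x => (Real.sqrt p : ℂ)⁻¹ * ZMod.stdAddChar (a * x ^ 2 + b * x)

theorem v3_eq_chirp : v3 = chirp 3 := by
  ext a b x
  simp [v3, chirp, ZMod.stdAddChar_apply, ZMod.toCircle_apply]

section chirp

variable {p : ℕ} [NeZero p]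

theorem norm_chirp_apply_sq (a b x : ZMod p) : ‖chirp p a b x‖ ^ 2 = 1 / p := by
  simp [chirp, AddChar.norm_apply]

theorem inner_chirp (a b a' b' : ZMod p) :
    ⟪chirp p a b, chirp p a' b'⟫_ℂ =
      (p : ℂ)⁻¹ * ∑ x, ZMod.stdAddChar ((a' - a) * x ^ 2 + (b' - b) * x) := by
  have hsq : (Real.sqrt p : ℂ)⁻¹ * conj ((Real.sqrt p : ℂ)⁻¹) = (p : ℂ)⁻¹ := by
    rw [Complex.conj_inv, Complex.conj_ofReal, ← mul_inv, ← Complex.ofReal_mul,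
      Real.mul_self_sqrt (Nat.cast_nonneg p), Complex.ofReal_natCast]
  simp only [PiLp.inner_apply, RCLike.inner_apply, chirp, Finset.mul_sum]
  refine Finset.sum_congr rfl fun x _ => ?_
  rw [map_mul, ← AddChar.map_neg_eq_conj, mul_mul_mul_comm, hsq, ← AddChar.map_add_eq_mul]
  congr 2
  ring

theorem orthonormal_chirp (a : ZMod p) : Orthonormal ℂ (chirp p a) := by
  rw [orthonormal_iff_ite]
  intro b b'
  simp_rw [inner_chirp, sub_self, zero_mul, zero_add, mul_comm (b' - b),
    AddChar.sum_mulShift _ (ZMod.isPrimitive_stdAddChar p), ZMod.card, sub_eq_zero,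
    eq_comm (a := b')]
  split_ifs <;> simp [NeZero.ne p]

theorem norm_inner_chirp_sq [Fact p.Prime] (hp : p ≠ 2) {a a' : ZMod p} (h : a ≠ a')
    (b b' : ZMod p) : ‖⟪chirp p a b, chirp p a' b'⟫_ℂ‖ ^ 2 = 1 / p := by
  rw [inner_chirp, norm_mul, mul_pow, AddChar.norm_sum_quadratic_sq (by rwa [ZMod.ringChar_zmod_n])
    (ZMod.isPrimitive_stdAddChar p) (sub_ne_zero.2 h.symm), ZMod.card, norm_inv,
    Complex.norm_natCast]
  field_simp

end chirp

noncomputable def mubFamily (p : ℕ) [NeZero p] :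
    Option (ZMod p) → ZMod p → EuclideanSpace ℂ (ZMod p)
  | none => fun x => EuclideanSpace.single x 1
  | some a => chirp p a

theorem W3_eq_mubFamily : W3 = mubFamily 3 := by
  ext (_ | a) : 1
  · rfl
  · exact congrFun v3_eq_chirp a

section mubFamily

variable {p : ℕ} [NeZero p]

theorem orthonormal_mubFamily (o : Option (ZMod p)) : Orthonormal ℂ (mubFamily p o) := by
  cases o with
  | none => exact EuclideanSpace.orthonormal_single
  | some a => exact orthonormal_chirp a

theorem norm_inner_mubFamily_sq [Fact p.Prime] (hp : p ≠ 2) {o o' : Option (ZMod p)} (h : o ≠ o')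
    (b b' : ZMod p) : ‖⟪mubFamily p o b, mubFamily p o' b'⟫_ℂ‖ ^ 2 = 1 / p := by
  match o, o' with
  | none, none => exact absurd rfl h
  | none, some a' =>
    rw [mubFamily, mubFamily, EuclideanSpace.inner_single_left, map_one, one_mul,
      norm_chirp_apply_sq]
  | some a, none =>
    rw [mubFamily, mubFamily, EuclideanSpace.inner_single_right, one_mul, Complex.norm_conj,
      norm_chirp_apply_sq]
  | some a, some a' => exact norm_inner_chirp_sq hp (fun ha => h (congrArg some ha)) b b'

end mubFamily

section outer

variable {ι : Type*} [Fintype ι]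

/- `outerVec u` is the matrix `|u⟩⟨u|`, read as a vector of `ℂ^{ι × ι}`, whose inner product is the
Hilbert–Schmidt one; `diagVec` is the identity matrix. -/
noncomputable def outerVec (u : EuclideanSpace ℂ ι) : EuclideanSpace ℂ (ι × ι) :=
  WithLp.toLp 2 fun x => u x.1 * conj (u x.2)

theorem inner_outerVec (u v : EuclideanSpace ℂ ι) :
    ⟪outerVec u, outerVec v⟫_ℂ = ‖⟪u, v⟫_ℂ‖ ^ 2 := by
  rw [← Complex.mul_conj']
  simp only [PiLp.inner_apply, RCLike.inner_apply, outerVec, Fintype.sum_prod_type, map_sum,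
    map_mul, Complex.conj_conj, Finset.sum_mul_sum]
  refine Finset.sum_congr rfl fun x _ => Finset.sum_congr rfl fun y _ => ?_
  ring

variable [DecidableEq ι]

def diagVec : EuclideanSpace ℂ (ι × ι) :=
  WithLp.toLp 2 fun x => if x.1 = x.2 then 1 else 0

theorem inner_diagVec_outerVec (u : EuclideanSpace ℂ ι) :
    ⟪(diagVec : EuclideanSpace ℂ (ι × ι)), outerVec u⟫_ℂ = ⟪u, u⟫_ℂ := by
  simp only [PiLp.inner_apply, RCLike.inner_apply, diagVec, outerVec, Fintype.sum_prod_type]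
  simp

theorem inner_diagVec_self :
    ⟪(diagVec : EuclideanSpace ℂ (ι × ι)), diagVec⟫_ℂ = Fintype.card ι := by
  simp only [PiLp.inner_apply, RCLike.inner_apply, diagVec, Fintype.sum_prod_type]
  simp

noncomputable def tracelessOuterVec (u : EuclideanSpace ℂ ι) : EuclideanSpace ℂ (ι × ι) :=
  outerVec u - (Fintype.card ι : ℂ)⁻¹ • diagVec

variable [Nonempty ι] {u v : EuclideanSpace ℂ ι}

theorem inner_diagVec_tracelessOuterVec (hu : ‖u‖ = 1) :
    ⟪diagVec, tracelessOuterVec u⟫_ℂ = 0 := by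
  rw [tracelessOuterVec, inner_sub_right, inner_smul_right, inner_diagVec_outerVec,
    inner_self_eq_one_of_norm_eq_one hu, inner_diagVec_self, inv_mul_cancel₀ (by simp), sub_self]

theorem inner_tracelessOuterVec (hu : ‖u‖ = 1) (hv : ‖v‖ = 1) :
    ⟪tracelessOuterVec u, tracelessOuterVec v⟫_ℂ = ‖⟪u, v⟫_ℂ‖ ^ 2 - (Fintype.card ι : ℂ)⁻¹ := by
  have hd : (Fintype.card ι : ℂ) ≠ 0 := by simp
  have hud : ⟪outerVec u, diagVec⟫_ℂ = 1 := by
    rw [← inner_conj_symm, inner_diagVec_outerVec, inner_self_eq_one_of_norm_eq_one hu, map_one]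
  simp only [tracelessOuterVec, inner_sub_left, inner_sub_right, inner_smul_left,
    inner_smul_right, inner_outerVec, inner_diagVec_outerVec, inner_diagVec_self,
    inner_self_eq_one_of_norm_eq_one hv, hud, map_inv₀, map_natCast]
  field_simp
  ring

end outer

theorem eq_zero_of_forall_eq_sum_div {K : Type*} [Field K] [CharZero K] {n : ℕ} {c : Fin n → K}
    (h : ∀ b, c b = (∑ a, c a) / (n + 1)) (b : Fin n) : c b = 0 := by
  have hsum : ∑ a, c a = ∑ _a : Fin n, (∑ a, c a) / (n + 1) := Finset.sum_congr rfl fun b _ => h b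
  rw [Finset.sum_const, Finset.card_univ, Fintype.card_fin, nsmul_eq_mul] at hsum
  have hs : ∑ a, c a = 0 := by
    field_simp at hsum
    linear_combination hsum
  rw [h b, hs, zero_div]

namespace IsMUBFamily

theorem inner_eq_ite {d m : ℕ} {B : Fin m → Fin d → EuclideanSpace ℂ (Fin d)}
    (hB : IsMUBFamily d m B) (i : Fin m) (a b : Fin d) :
    ⟪B i a, B i b⟫_ℂ = if a = b then 1 else 0 :=
  orthonormal_iff_ite.1 (hB.1 i).1 a b

variable {n m : ℕ} {B : Fin m → Fin (n + 1) → EuclideanSpace ℂ (Fin (n + 1))}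

theorem inner_tracelessOuterVec (hB : IsMUBFamily (n + 1) m B) (i j : Fin m) (a b : Fin (n + 1)) :
    ⟪tracelessOuterVec (B i a), tracelessOuterVec (B j b)⟫_ℂ =
      if i = j then (if a = b then 1 else 0) - ((n : ℂ) + 1)⁻¹ else 0 := by
  rw [_root_.inner_tracelessOuterVec ((hB.1 i).1.1 a) ((hB.1 j).1.1 b), Fintype.card_fin]
  by_cases hij : i = j
  · subst hij
    rw [hB.inner_eq_ite]
    by_cases hab : a = b <;> simp [hab]
  · rw [if_neg hij, ← Complex.ofReal_pow, hB.2 i j hij]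
    push_cast
    ring

/-- One vector of each basis is left out: the traceless projectors of a whole basis sum to zero. -/
theorem linearIndependent_tracelessOuterVec (hB : IsMUBFamily (n + 1) m B) :
    LinearIndependent ℂ fun ia : Fin m × Fin n => tracelessOuterVec (B ia.1 ia.2.castSucc) := by
  rw [Fintype.linearIndependent_iff]
  rintro g hg ⟨i, b⟩
  refine eq_zero_of_forall_eq_sum_div (c := fun b => g (i, b)) (fun b => ?_) b
  have h := congrArg (fun w => ⟪tracelessOuterVec (B i b.castSucc), w⟫_ℂ) hg
  simp only [inner_sum, inner_smul_right, inner_zero_right, Fintype.sum_prod_type,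
    hB.inner_tracelessOuterVec, Fin.castSucc_inj, mul_ite, mul_zero, Finset.sum_ite_irrel,
    Finset.sum_const_zero, Finset.sum_ite_eq, Finset.mem_univ, if_true, mul_sub, mul_one,
    Finset.sum_sub_distrib, ← Finset.sum_mul] at h
  linear_combination h

theorem mul_add_one_le (hB : IsMUBFamily (n + 1) m B) : m * n + 1 ≤ (n + 1) ^ 2 := by
  set Q := fun ia : Fin m × Fin n => tracelessOuterVec (B ia.1 ia.2.castSucc)
  have hdiag : diagVec ∉ Submodule.span ℂ (Set.range Q) := by
    intro hmem
    have horth : diagVec ∈ (ℂ ∙ (diagVec : EuclideanSpace ℂ (Fin (n + 1) × Fin (n + 1))))ᗮ :=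
      Submodule.span_le.2 (Set.range_subset_iff.2 fun ia =>
        Submodule.mem_orthogonal_singleton_iff_inner_right.2
          (inner_diagVec_tracelessOuterVec ((hB.1 _).1.1 _))) hmem
    have h := Submodule.inner_right_of_mem_orthogonal (Submodule.mem_span_singleton_self _) horth
    rw [inner_diagVec_self, Fintype.card_fin] at h
    exact Nat.cast_ne_zero.2 n.succ_ne_zero h
  have hcard := (linearIndependent_option'.2
    ⟨hB.linearIndependent_tracelessOuterVec, hdiag⟩).fintype_card_le_finrank
  simp only [Fintype.card_option, Fintype.card_prod, Fintype.card_fin, finrank_euclideanSpace]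
    at hcard
  nlinarith

theorem le_add_one {d m : ℕ} {B : Fin m → Fin d → EuclideanSpace ℂ (Fin d)}
    (hB : IsMUBFamily d m B) (hd : 2 ≤ d) : m ≤ d + 1 := by
  obtain ⟨n, rfl⟩ : ∃ n, d = n + 1 := ⟨d - 1, by omega⟩
  have h := hB.mul_add_one_le
  have : m * n ≤ (n + 2) * n := by nlinarith
  exact Nat.le_of_mul_le_mul_right this (by omega)

end IsMUBFamily

theorem exists_isMUBFamily {κ ι : Type*} [Fintype κ] [Fintype ι] {m d : ℕ}
    (hκ : Fintype.card κ = m) (hι : Fintype.card ι = d) (W : κ → ι → EuclideanSpace ℂ ι)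
    (hW : ∀ k, Orthonormal ℂ (W k))
    (hunbiased : ∀ k k', k ≠ k' → ∀ b b', ‖⟪W k b, W k' b'⟫_ℂ‖ ^ 2 = 1 / d) :
    ∃ B : Fin m → Fin d → EuclideanSpace ℂ (Fin d), IsMUBFamily d m B := by
  let e := Fintype.equivFinOfCardEq hκ
  let f := Fintype.equivFinOfCardEq hι
  let T := LinearIsometryEquiv.piLpCongrLeft 2 ℂ ℂ f
  have hon : ∀ i, Orthonormal ℂ (T ∘ W (e.symm i) ∘ f.symm) := fun i =>
    ((hW _).comp _ f.symm.injective).comp_linearIsometryEquiv T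
  refine ⟨fun i => T ∘ W (e.symm i) ∘ f.symm, fun i => ⟨hon i, ?_⟩, fun i j hij b b' => ?_⟩
  · exact (hon i).linearIndependent.span_eq_top_of_card_eq_finrank' (by simp)
  · simpa [T] using hunbiased _ _ (e.symm.injective.ne hij) (f.symm b) (f.symm b')

theorem N_eq_of_isMUBFamily {d m : ℕ} {B : Fin m → Fin d → EuclideanSpace ℂ (Fin d)}
    (hB : IsMUBFamily d m B)
    (hmax : ∀ k (B' : Fin k → Fin d → EuclideanSpace ℂ (Fin d)), IsMUBFamily d k B' → k ≤ m) :
    N d = m :=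
  IsGreatest.csSup_eq ⟨⟨B, hB⟩, fun _ ⟨B', hB'⟩ => hmax _ B' hB'⟩

theorem N_eq_add_one (p : ℕ) [Fact p.Prime] (hp : p ≠ 2) : N p = p + 1 := by
  obtain ⟨B, hB⟩ := exists_isMUBFamily (m := p + 1) (by simp) (ZMod.card p) (mubFamily p)
    orthonormal_mubFamily fun _ _ h => norm_inner_mubFamily_sq hp h
  exact N_eq_of_isMUBFamily hB fun _ _ hB' => hB'.le_add_one (Nat.Prime.two_le Fact.out)

/-- In `ℂ³`, the standard basis together with the three bases `B_a`, `a ∈ F₃`,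
form four pairwise mutually unbiased orthonormal bases; in particular
`N(3) = 4`. -/
theorem four_mubs_dim_three :
    (∀ o : Option (ZMod 3),
      ∃ B : OrthonormalBasis (ZMod 3) ℂ (EuclideanSpace ℂ (ZMod 3)),
        ∀ b : ZMod 3, B b = W3 o b) ∧
    (∀ o o' : Option (ZMod 3), o ≠ o' → ∀ b b' : ZMod 3,
      ‖⟪W3 o b, W3 o' b'⟫_ℂ‖ ^ 2 = 1 / 3) ∧
    N 3 = 4 := by
  refine ⟨fun o => ?_, fun o o' h b b' => ?_, N_eq_add_one 3 (by norm_num)⟩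
  · rw [W3_eq_mubFamily]
    exact ⟨OrthonormalBasis.mk (orthonormal_mubFamily o)
      ((orthonormal_mubFamily o).linearIndependent.span_eq_top_of_card_eq_finrank' (by simp)).ge,
      fun b => by simp⟩
  · rw [W3_eq_mubFamily, norm_inner_mubFamily_sq (by norm_num) h]
    norm_num
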